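/- arXiv:2501.16032 — 3 statements merged into one kernel-verified Lean document; each statement's English description precedes it below -/
import Mathlib

section
/- Let n ≥ 2, n ≡ 2 or 3 mod 4. On the hyperplane V = {x ∈ ℝ^{n+2} : Σ_k x_k = 0}, the polynomial Ṽ(x) = (Σ_k x_k³)·V(x), where V is the Vandermonde polynomial, satisfies Δ_{ℝ^{n+2}} Ṽ(x) = Hess Ṽ(N,N)(x) for all x ∈ V, where N = (1,...,1); in particular its restriction to V is harmonic for the induced metric. -/
/-!
Write `pₘ = ∑ xₖᵐ`, so `Ṽ = p₃ V`, and `D = ∑ₖ ∂ₖ`, so `Hess Ṽ (N, N) = D² Ṽ`. The product rule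
gives `Δ Ṽ = 6 p₁ V + 6 ∑ₖ xₖ² ∂ₖ V + p₃ Δ V` and `D Ṽ = 3 p₂ V + p₃ D V`, so both sides are
multiples of `p₁ V` once `D V = 0`, `∑ₖ xₖ² ∂ₖ V = (N - 1) p₁ V` and `Δ V = 0`.
Since `V = ∏_{i<j} (xᵢ - xⱼ)`, a derivation with `D' (xᵢ - xⱼ) = gᵢⱼ (xᵢ - xⱼ)` sends `V` to
`(∑ gᵢⱼ) V`: for `D` all `gᵢⱼ` vanish, and for `∑ₖ xₖ² ∂ₖ` we get `gᵢⱼ = xᵢ + xⱼ`, with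
`∑_{i<j} (xᵢ + xⱼ) = (N - 1) p₁`. Finally, up to sign `V = det (xᵢ ^ j) = ∑_σ sign σ ∏ xᵢ^{σ i}`,
and in `Δ` of this sum the terms where an exponent `a ≥ 2` drops to `a - 2` cancel in pairs
under `σ ↦ (a, a - 2) σ`.
-/

open MvPolynomial

noncomputable def vandermondePoly (N : ℕ) : MvPolynomial (Fin N) ℝ :=
  ∏ p ∈ Finset.univ.filter (fun p : Fin N × Fin N => p.1 < p.2), (X p.1 - X p.2)

noncomputable def vandermondeTilde (N : ℕ) : MvPolynomial (Fin N) ℝ :=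
  (∑ k : Fin N, X k ^ 3) * vandermondePoly N

open Finset Equiv

theorem Finset.sum_lt_pairs_add {ι R : Type*} [Fintype ι] [LinearOrder ι] [CommRing R]
    (f : ι → R) :
    ∑ p ∈ univ.filter (fun p : ι × ι => p.1 < p.2), (f p.1 + f p.2)
      = (Fintype.card ι - 1) * ∑ i, f i := by
  have hswap : ∑ p ∈ univ.filter (fun p : ι × ι => p.1 < p.2), f p.2
      = ∑ p ∈ univ.filter (fun p : ι × ι => p.2 < p.1), f p.1 :=
    sum_nbij' Prod.swap Prod.swap (by simp) (by simp) (by simp) (by simp) (by simp)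
  rw [sum_add_distrib, hswap, ← sum_union (disjoint_filter.2 fun p _ h => not_lt_of_gt h),
    ← filter_or]
  simp only [lt_or_lt_iff_ne, sum_filter, Fintype.sum_prod_type, mul_sum]
  refine sum_congr rfl fun i _ => ?_
  simp [sum_ite, filter_ne, card_erase_of_mem, Nat.cast_sub (Fintype.card_pos_iff.2 ⟨i⟩)]

theorem Equiv.Perm.sum_eq_zero_of_swap_mul {α M : Type*} [DecidableEq α] [Fintype α]
    [AddCommGroup M] {a b : α} (hab : a ≠ b) (f : Perm α → M)
    (hf : ∀ σ, f (swap a b * σ) = -f σ) : ∑ σ, f σ = 0 :=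
  sum_involution (fun σ _ => swap a b * σ) (fun σ _ => by rw [hf, add_neg_cancel])
    (fun _ _ _ => swap_mul_eq_iff.not.mpr hab) (fun _ _ => mem_univ _)
    (fun σ _ => swap_mul_self_mul a b σ)

namespace Derivation

variable {R A M : Type*} [CommSemiring R] [CommSemiring A] [Algebra R A] [AddCommMonoid M]
  [Module A M] [Module R M]

theorem sum_apply {ι : Type*} (s : Finset ι) (D : ι → Derivation R A M) (a : A) :
    (∑ i ∈ s, D i) a = ∑ i ∈ s, D i a := by
  simp only [← coeFnAddMonoidHom_apply, map_sum, Finset.sum_apply]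

@[simp]
theorem map_ofNat (D : Derivation R A M) (n : ℕ) [n.AtLeastTwo] :
    D (no_index (OfNat.ofNat n : A)) = 0 :=
  D.map_natCast n

theorem map_prod_of_map_eq_mul {ι : Type*} (D : Derivation R A A) (s : Finset ι) (f g : ι → A)
    (h : ∀ i ∈ s, D (f i) = g i * f i) :
    D (∏ i ∈ s, f i) = (∑ i ∈ s, g i) * ∏ i ∈ s, f i := by
  classical
  induction s using Finset.induction_on with
  | empty => simp
  | insert a s ha ih =>
    rw [prod_insert ha, sum_insert ha, D.leibniz, smul_eq_mul, smul_eq_mul,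
      ih fun i hi => h i (mem_insert_of_mem hi), h a (mem_insert_self a s)]
    ring

end Derivation

namespace MvPolynomial

variable {σ R : Type*} [Fintype σ] [CommSemiring R]

theorem sum_smul_pderiv_X (a : σ → MvPolynomial σ R) (i : σ) :
    (∑ k, a k • pderiv k) (X i) = a i := by
  classical
  simp [Derivation.sum_apply, Pi.single_apply]

theorem pderiv_sum_X_pow (n : ℕ) (k : σ) :
    pderiv k (∑ i, X i ^ n : MvPolynomial σ R) = (n : MvPolynomial σ R) * X k ^ (n - 1) := by
  classical
  simp [Pi.single_apply]

theorem sum_pderiv_pderiv_monomial (e : σ →₀ ℕ) (c : R) :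
    ∑ k, pderiv k (pderiv k (monomial e c))
      = ∑ k, monomial (e - Finsupp.single k 2) (c * (e k * (e k - 1) : ℕ)) := by
  refine sum_congr rfl fun k _ => ?_
  rw [pderiv_monomial, pderiv_monomial, tsub_tsub, ← Finsupp.single_add]
  simp [mul_assoc]

end MvPolynomial

section VandermondeDet

variable {R : Type*} [CommRing R] {N : ℕ}

noncomputable def permExponent (σ : Perm (Fin N)) : Fin N →₀ ℕ :=
  Finsupp.equivFunOnFinite.symm fun i => σ i

@[simp]
theorem permExponent_apply (σ : Perm (Fin N)) (i : Fin N) : permExponent σ i = σ i := rfl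

theorem permExponent_swap_mul_sub_single {σ : Perm (Fin N)} {a b : Fin N}
    (hab : (b : ℕ) + 2 = a) :
    permExponent (swap a b * σ) - Finsupp.single ((swap a b * σ)⁻¹ a) 2
      = permExponent σ - Finsupp.single (σ⁻¹ a) 2 := by
  have hne : a ≠ b := Fin.ne_of_val_ne (by omega)
  have hb : (swap a b * σ)⁻¹ a = σ⁻¹ b := by simp [Perm.mul_def]
  ext j
  simp only [hb, Finsupp.tsub_apply, permExponent_apply, Finsupp.single_apply, Perm.mul_apply,
    Perm.inv_eq_iff_eq]
  rcases eq_or_ne (σ j) a with h | h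
  · rw [h, swap_apply_left, if_neg hne.symm, if_pos rfl]; omega
  rcases eq_or_ne (σ j) b with h' | h'
  · rw [h', swap_apply_right, if_neg hne, if_pos rfl]; omega
  · rw [swap_apply_of_ne_of_ne h h', if_neg (Ne.symm h), if_neg (Ne.symm h')]

theorem det_vandermonde_X :
    (Matrix.vandermonde (X : Fin N → MvPolynomial (Fin N) R)).det
      = ∑ σ : Perm (Fin N), monomial (permExponent σ) (Perm.sign σ : R) := by
  rw [← Matrix.det_transpose, Matrix.det_apply]
  refine sum_congr rfl fun σ _ => ?_
  rw [monomial_eq, Finsupp.prod_fintype _ _ fun _ => pow_zero _]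
  simp [Units.smul_def, zsmul_eq_mul]

theorem sum_pderiv_pderiv_det_vandermonde_X :
    ∑ k, pderiv k (pderiv k (Matrix.vandermonde (X : Fin N → MvPolynomial (Fin N) R)).det)
      = 0 := by
  simp_rw [det_vandermonde_X, map_sum]
  rw [sum_comm]
  simp_rw [sum_pderiv_pderiv_monomial]
  -- index the inner sum by the exponent `a = σ k` instead of the variable `k`
  rw [sum_congr rfl fun σ _ => (Fintype.sum_equiv σ⁻¹ _ _ fun _ => rfl).symm, sum_comm]
  refine sum_eq_zero fun a _ => ?_
  by_cases ha : 2 ≤ (a : ℕ)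
  · set b : Fin N := ⟨a - 2, by omega⟩
    have hab : (b : ℕ) + 2 = a := Nat.sub_add_cancel ha
    have hne : a ≠ b := Fin.ne_of_val_ne (by omega)
    refine Perm.sum_eq_zero_of_swap_mul hne _ fun σ => ?_
    rw [permExponent_swap_mul_sub_single hab, ← map_neg]
    simp [Perm.sign_mul, Perm.sign_swap hne]
  · have ha' : (a : ℕ) * (a - 1) = 0 := Nat.mul_eq_zero.2 (by omega)
    exact sum_eq_zero fun σ _ => by simp [ha']

end VandermondeDet

theorem vandermondePoly_eq_smul_det (N : ℕ) :
    vandermondePoly N = (-1 : ℝ) ^ #(univ.filter fun p : Fin N × Fin N => p.1 < p.2)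
      • (Matrix.vandermonde (X : Fin N → MvPolynomial (Fin N) ℝ)).det := by
  have hpairs : ∏ p ∈ univ.filter (fun p : Fin N × Fin N => p.1 < p.2), (X p.2 - X p.1)
      = ∏ i, ∏ j ∈ Ioi i, (X j - X i : MvPolynomial (Fin N) ℝ) := by
    simp_rw [prod_filter, Fintype.prod_prod_type, ← prod_filter, filter_lt_eq_Ioi]
  rw [Matrix.det_vandermonde, ← hpairs, smul_eq_C_mul, map_pow, map_neg, map_one, ← prod_neg,
    vandermondePoly]
  simp

theorem sum_pderiv_pderiv_vandermondePoly (N : ℕ) :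
    ∑ k, pderiv k (pderiv k (vandermondePoly N)) = 0 := by
  rw [vandermondePoly_eq_smul_det]
  simp only [Derivation.map_smul, ← smul_sum, sum_pderiv_pderiv_det_vandermonde_X, smul_zero]

theorem sum_pderiv_vandermondePoly (N : ℕ) : ∑ k, pderiv k (vandermondePoly N) = 0 := by
  rw [← Derivation.sum_apply, vandermondePoly,
    Derivation.map_prod_of_map_eq_mul _ _ _ (fun _ => 0) fun p _ => ?_]
  · simp
  · simp [Derivation.sum_apply]

theorem sum_sq_mul_pderiv_vandermondePoly (N : ℕ) :
    ∑ k, X k ^ 2 * pderiv k (vandermondePoly N)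
      = ((N : MvPolynomial (Fin N) ℝ) - 1) * (∑ k, X k) * vandermondePoly N := by
  have hE := (∑ k, X k ^ 2 • pderiv k :
      Derivation ℝ (MvPolynomial (Fin N) ℝ) _).map_prod_of_map_eq_mul
    (univ.filter fun p : Fin N × Fin N => p.1 < p.2) (fun p => X p.1 - X p.2)
    (fun p => X p.1 + X p.2) fun p _ => by
      rw [map_sub, sum_smul_pderiv_X, sum_smul_pderiv_X]
      ring
  rw [Derivation.sum_apply, sum_lt_pairs_add, Fintype.card_fin] at hE
  simpa [vandermondePoly] using hE

theorem sum_pderiv_pderiv_vandermondeTilde (N : ℕ) :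
    ∑ k, pderiv k (pderiv k (vandermondeTilde N))
      = 6 * (N : MvPolynomial (Fin N) ℝ) * (∑ k, X k) * vandermondePoly N := by
  have hk : ∀ k : Fin N, pderiv k (pderiv k (vandermondeTilde N))
      = 6 * X k * vandermondePoly N + 6 * (X k ^ 2 * pderiv k (vandermondePoly N))
        + (∑ i, X i ^ 3) * pderiv k (pderiv k (vandermondePoly N)) := by
    intro k
    simp only [vandermondeTilde, pderiv_mul, pderiv_sum_X_pow, pderiv_pow, pderiv_X_self,
      Derivation.map_natCast, map_add]
    norm_num
    ring
  rw [sum_congr rfl fun k _ => hk k, sum_add_distrib, sum_add_distrib, ← sum_mul, ← mul_sum,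
    ← mul_sum, ← mul_sum, sum_sq_mul_pderiv_vandermondePoly, sum_pderiv_pderiv_vandermondePoly,
    mul_zero, add_zero]
  ring

theorem sum_sum_pderiv_pderiv_vandermondeTilde (N : ℕ) :
    ∑ i, ∑ j, pderiv i (pderiv j (vandermondeTilde N))
      = 6 * (∑ k, X k) * vandermondePoly N := by
  have hD : ∑ j, pderiv j (vandermondeTilde N) = 3 * (∑ k, X k ^ 2) * vandermondePoly N := by
    simp only [vandermondeTilde, pderiv_mul, sum_add_distrib, ← mul_sum, ← sum_mul,
      pderiv_sum_X_pow, sum_pderiv_vandermondePoly]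
    norm_num
  simp only [← map_sum, hD, pderiv_mul, sum_add_distrib, ← mul_sum, ← sum_mul, pderiv_sum_X_pow,
    sum_pderiv_vandermondePoly, Derivation.map_ofNat]
  push_cast [pow_one]
  ring

theorem stmt_6_general (n : ℕ) :
    ∀ x : Fin (n + 2) → ℝ, (∑ k, x k = 0) →
      eval x (∑ k : Fin (n + 2), pderiv k (pderiv k (vandermondeTilde (n + 2))))
        = eval x (∑ i : Fin (n + 2), ∑ j : Fin (n + 2),
            pderiv i (pderiv j (vandermondeTilde (n + 2)))) := by
  intro x hx
  rw [sum_pderiv_pderiv_vandermondeTilde, sum_sum_pderiv_pderiv_vandermondeTilde]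
  simp [hx]

/-- For `n ≡ 2, 3 (mod 4)`, on the hyperplane `{∑ x_k = 0} ⊂ ℝ^{n+2}` the polynomial
`Ṽ = (∑ x_k³)·V` satisfies `Δ Ṽ(x) = Hess Ṽ(N,N)(x)`, where `N = (1,...,1)`
(so `Hess Ṽ(N,N) = ∑_{i,j} ∂_i ∂_j Ṽ`); in particular its restriction is harmonic
for the induced metric. -/
theorem stmt_6 (n : ℕ) (hn : 2 ≤ n) (hmod : n % 4 = 2 ∨ n % 4 = 3) :
    ∀ x : Fin (n + 2) → ℝ, (∑ k, x k = 0) →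
      eval x (∑ k : Fin (n + 2), pderiv k (pderiv k (vandermondeTilde (n + 2))))
        = eval x (∑ i : Fin (n + 2), ∑ j : Fin (n + 2),
            pderiv i (pderiv j (vandermondeTilde (n + 2)))) :=
  stmt_6_general n
end

section
/- The critical points of f = (Σ_k x_k^m)|_{S^n ∩ V}, where m > 1 is odd and V = {Σ x_k = 0} ⊂ ℝ^{n+2}, are exactly the points x whose coordinates take (up to permutation) exactly two values a_k > 0 > b_k with k coordinates equal to a_k = √((n+2-k)/((n+2)k)) and n+2-k coordinates equal to b_k = -√(k/((n+2)(n+2-k))), together with their negatives; moreover the critical values t_k = k·a_k^m + (n+2-k)·b_k^m are strictly decreasing in k for 1 ≤ k ≤ ⌊(n+2)/2⌋. -/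
/-- The positive coordinate value `a_k = √((n+2-k)/((n+2)k))`. -/
noncomputable def aVal (n k : ℕ) : ℝ :=
  Real.sqrt (((n : ℝ) + 2 - k) / (((n : ℝ) + 2) * k))

/-- The negative coordinate value `b_k = -√(k/((n+2)(n+2-k)))`. -/
noncomputable def bVal (n k : ℕ) : ℝ :=
  - Real.sqrt ((k : ℝ) / (((n : ℝ) + 2) * ((n : ℝ) + 2 - k)))

/-- The critical value `t_k = k·a_k^m + (n+2-k)·b_k^m`. -/
noncomputable def tVal (n k m : ℕ) : ℝ :=
  (k : ℝ) * aVal n k ^ m + ((n : ℝ) + 2 - k) * bVal n k ^ m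

/-!
The Lagrange condition says that every coordinate is a root of `t ↦ m t^(m-1) - 2μt - ν`, which
is strictly convex because `m - 1` is even; hence the coordinates take only two values, the
maximum `a` and the minimum `b`. If `k` coordinates equal `a`, the constraints read
`k a + (n+2-k) b = 0` and `k a² + (n+2-k) b² = 1`, which force `a = a_k`, `b = b_k`. Conversely a
two-valued vector satisfies the Lagrange condition with the line through the two corresponding
points of the graph of `t ↦ t^(m-1)`.

With `S = √((n+2) k (n+2-k))` one has `a_k = (n+2-k)/S` and `b_k = -k/S`, so
`t_k = ((n+2-k)^(m-1) - k^(m-1)) / ((n+2) S^(m-2))`; for `k < (n+2)/2` the numerator decreases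
and the denominator increases with `k`.
-/

theorem StrictConvexOn.eq_or_eq_of_eq_affine {s : Set ℝ} {g : ℝ → ℝ}
    (hg : StrictConvexOn ℝ s g) {α β a b c : ℝ} (has : a ∈ s) (hcs : c ∈ s) (hab : a ≤ b)
    (hbc : b ≤ c) (ha : g a = α * a + β) (hb : g b = α * b + β) (hc : g c = α * c + β) :
    b = a ∨ b = c := by
  by_contra! hne
  have hslope := hg.slope_strict_mono_adjacent has hcs (hab.lt_of_ne hne.1.symm)
    (hbc.lt_of_ne hne.2)
  rw [ha, hb, hc, show α * b + β - (α * a + β) = α * (b - a) by ring,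
    show α * c + β - (α * b + β) = α * (c - b) by ring,
    mul_div_cancel_right₀ _ (sub_ne_zero.2 hne.1),
    mul_div_cancel_right₀ _ (sub_ne_zero.2 hne.2.symm)] at hslope
  exact hslope.false

theorem StrictConvexOn.exists_forall_eq_or_eq {ι : Type*} [Finite ι] [Nonempty ι] {g : ℝ → ℝ}
    (hg : StrictConvexOn ℝ Set.univ g) {x : ι → ℝ} {α β : ℝ}
    (h : ∀ i, g (x i) = α * x i + β) :
    ∃ i₀ j₀, x j₀ ≤ x i₀ ∧ ∀ i, x i = x i₀ ∨ x i = x j₀ := by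
  obtain ⟨i₀, hmax⟩ := Finite.exists_max x
  obtain ⟨j₀, hmin⟩ := Finite.exists_min x
  exact ⟨i₀, j₀, hmin i₀, fun i =>
    (hg.eq_or_eq_of_eq_affine trivial trivial (hmin i) (hmax i) (h j₀) (h i) (h i₀)).symm⟩

theorem exists_affine_of_forall_eq_or_eq {ι : Type*} (g : ℝ → ℝ) {x : ι → ℝ} {a b : ℝ}
    (hab : a ≠ b) (h : ∀ i, x i = a ∨ x i = b) :
    ∃ α β : ℝ, ∀ i, g (x i) = α * x i + β := by
  have hd : a - b ≠ 0 := sub_ne_zero.2 hab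
  refine ⟨(g a - g b) / (a - b), g a - (g a - g b) / (a - b) * a, fun i => ?_⟩
  rcases h i with hi | hi <;> rw [hi] <;> field_simp <;> ring

open Finset in
theorem sum_comp_of_forall_eq_or_eq {ι : Type*} [Fintype ι] {x : ι → ℝ} {a b : ℝ}
    (h : ∀ i, x i = a ∨ x i = b) (f : ℝ → ℝ) :
    ∑ i, f (x i) = #{i | x i = a} * f a + (Fintype.card ι - #{i | x i = a}) * f b := by
  have hcard : (#{i | ¬x i = a} : ℝ) = Fintype.card ι - #{i | x i = a} := by
    rw [eq_sub_iff_add_eq', ← Nat.cast_add, card_filter_add_card_filter_not, card_univ]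
  rw [← sum_filter_add_sum_filter_not univ (fun i => x i = a), ← hcard]
  congr 1
  · rw [sum_congr rfl fun i hi => by rw [(mem_filter.1 hi).2], sum_const, nsmul_eq_mul]
  · rw [sum_congr rfl fun i hi => by rw [(h i).resolve_left (mem_filter.1 hi).2], sum_const,
      nsmul_eq_mul]

theorem exists_lagrange_iff_exists_affine {ι : Type*} {m : ℕ} (hm : m ≠ 0) (x : ι → ℝ) :
    (∃ μ ν : ℝ, ∀ i, (m : ℝ) * x i ^ (m - 1) - 2 * μ * x i - ν = 0) ↔
      ∃ α β : ℝ, ∀ i, x i ^ (m - 1) = α * x i + β := by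
  have hm' : (m : ℝ) ≠ 0 := Nat.cast_ne_zero.2 hm
  constructor
  · rintro ⟨μ, ν, h⟩
    refine ⟨2 * μ / m, ν / m, fun i => ?_⟩
    field_simp
    linarith [h i]
  · rintro ⟨α, β, h⟩
    exact ⟨m * α / 2, m * β, fun i => by rw [h i]; ring⟩

section
variable {n k : ℕ}

theorem one_le_add_two_sub (hkn : k ≤ n + 1) : (1 : ℝ) ≤ n + 2 - k := by
  have : (k : ℝ) ≤ n + 1 := by exact_mod_cast hkn
  linarith

theorem eq_aVal_and_eq_bVal (hk : 1 ≤ k) (hkn : k ≤ n + 1) {a b : ℝ} (hba : b < a)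
    (hsum : k * a + (n + 2 - k) * b = 0) (hsq : k * a ^ 2 + (n + 2 - k) * b ^ 2 = 1) :
    a = aVal n k ∧ b = bVal n k := by
  have hp : (1 : ℝ) ≤ k := by exact_mod_cast hk
  have hq := one_le_add_two_sub hkn
  have ha : 0 < a := by nlinarith
  have hb : b < 0 := by nlinarith
  constructor
  · rw [aVal, eq_comm, Real.sqrt_eq_iff_eq_sq (by positivity) ha.le, div_eq_iff (by positivity)]
    linear_combination (-(n + 2 - k : ℝ)) * hsq + ((n + 2 - k) * b - k * a) * hsum
  · rw [bVal, ← neg_eq_iff_eq_neg, eq_comm, Real.sqrt_eq_iff_eq_sq (by positivity) (by linarith),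
      div_eq_iff (by positivity)]
    linear_combination (-(k : ℝ)) * hsq + (k * a - (n + 2 - k) * b) * hsum

theorem aVal_eq (hk : 1 ≤ k) (hkn : k ≤ n + 1) :
    aVal n k = (n + 2 - k) / √((n + 2) * k * (n + 2 - k)) := by
  have hp : (1 : ℝ) ≤ k := by exact_mod_cast hk
  have hq := one_le_add_two_sub hkn
  rw [aVal, Real.sqrt_eq_iff_eq_sq (by positivity) (by positivity), div_pow,
    Real.sq_sqrt (by positivity)]
  field_simp

theorem bVal_eq (hk : 1 ≤ k) (hkn : k ≤ n + 1) :
    bVal n k = -(k / √((n + 2) * k * (n + 2 - k))) := by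
  have hp : (1 : ℝ) ≤ k := by exact_mod_cast hk
  have hq := one_le_add_two_sub hkn
  rw [bVal, neg_inj, Real.sqrt_eq_iff_eq_sq (by positivity) (by positivity), div_pow,
    Real.sq_sqrt (by positivity)]
  field_simp

theorem bVal_lt_aVal (hk : 1 ≤ k) (hkn : k ≤ n + 1) : bVal n k < aVal n k := by
  have hp : (1 : ℝ) ≤ k := by exact_mod_cast hk
  have hq := one_le_add_two_sub hkn
  rw [aVal_eq hk hkn, bVal_eq hk hkn, neg_lt_iff_pos_add, ← add_div]
  positivity

theorem tVal_eq {m : ℕ} (hm : Odd m) (hm1 : 1 < m) (hk : 1 ≤ k) (hkn : k ≤ n + 1) :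
    tVal n k m = ((n + 2 - k) ^ (m - 1) - k ^ (m - 1)) /
      ((n + 2) * √((n + 2) * k * (n + 2 - k)) ^ (m - 2)) := by
  have hp : (1 : ℝ) ≤ k := by exact_mod_cast hk
  have hq := one_le_add_two_sub hkn
  have hS := Real.sq_sqrt (show (0 : ℝ) ≤ (n + 2) * k * (n + 2 - k) by positivity)
  have hS0 : 0 < √((n + 2) * k * (n + 2 - k) : ℝ) := by positivity
  rw [tVal, aVal_eq hk hkn, bVal_eq hk hkn, hm.neg_pow, div_pow, div_pow]
  obtain ⟨j, rfl⟩ : ∃ j, m = j + 2 := ⟨m - 2, by omega⟩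
  rw [show j + 2 - 1 = j + 1 by omega, Nat.add_sub_cancel, pow_add (√_) j 2, hS]
  field_simp
  ring

theorem tVal_succ_lt_tVal {m : ℕ} (hm : Odd m) (hm1 : 1 < m) (hk : 1 ≤ k)
    (hk2 : k + 1 ≤ (n + 2) / 2) : tVal n (k + 1) m < tVal n k m := by
  have hp : (1 : ℝ) ≤ k := by exact_mod_cast hk
  have h2k : 2 * ((k : ℝ) + 1) ≤ n + 2 := by exact_mod_cast (by omega : 2 * (k + 1) ≤ n + 2)
  rw [tVal_eq hm hm1 hk (by omega), tVal_eq hm hm1 (by omega) (by omega)]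
  push_cast
  apply div_lt_div₀
  · have h1 := pow_lt_pow_left₀ (show (n + 2 - (k + 1) : ℝ) < n + 2 - k by linarith)
      (by linarith) (by omega : m - 1 ≠ 0)
    have h2 := pow_lt_pow_left₀ (show (k : ℝ) < k + 1 by linarith) (by linarith)
      (by omega : m - 1 ≠ 0)
    linarith
  · gcongr _ * √?_ ^ _
    nlinarith
  · exact sub_nonneg.2 (pow_le_pow_left₀ (by linarith) (by linarith) _)
  · have : (0 : ℝ) < n + 2 - k := by linarith
    positivity

end

open Finset in
theorem exists_aVal_bVal_of_forall_eq_or_eq {n : ℕ} {x : Fin (n + 2) → ℝ} (hsum : ∑ i, x i = 0)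
    (hsq : ∑ i, x i ^ 2 = 1) {i₀ j₀ : Fin (n + 2)} (hle : x j₀ ≤ x i₀)
    (h : ∀ i, x i = x i₀ ∨ x i = x j₀) :
    ∃ k : ℕ, 1 ≤ k ∧ k ≤ n + 1 ∧ (∀ i, x i = aVal n k ∨ x i = bVal n k) ∧
      {i | x i = aVal n k}.ncard = k := by
  set a := x i₀
  set b := x j₀
  have hlt : b < a := by
    refine hle.lt_of_ne fun hba => ?_
    have hconst : ∀ i, x i = a := fun i => (h i).elim id (·.trans hba)
    simp only [hconst, sum_const, card_univ, Fintype.card_fin, nsmul_eq_mul] at hsum hsq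
    have ha : a = 0 := by
      rcases mul_eq_zero.1 hsum with h0 | h0
      · norm_cast at h0
      · exact h0
    simp [ha] at hsq
  set k := #{i | x i = a}
  have hk : 1 ≤ k := card_pos.2 ⟨i₀, by simp [a]⟩
  have hkn : k ≤ n + 1 := by
    have := card_lt_univ_of_notMem (s := {i | x i = a}) (x := j₀) (by simpa using hlt.ne)
    simp only [Fintype.card_fin] at this
    omega
  have hsum' := sum_comp_of_forall_eq_or_eq h id
  have hsq' := sum_comp_of_forall_eq_or_eq h (· ^ 2)
  simp only [id, Fintype.card_fin, Nat.cast_add, Nat.cast_ofNat] at hsum' hsq'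
  obtain ⟨ha, hb⟩ := eq_aVal_and_eq_bVal hk hkn hlt (hsum' ▸ hsum) (hsq' ▸ hsq)
  refine ⟨k, hk, hkn, by rwa [← ha, ← hb], ?_⟩
  rw [← ha, Set.ncard_eq_toFinset_card', Set.toFinset_ofPred]

/-- Classification of the critical points of `f = (∑ x_k^m)|_{Sⁿ ∩ V}` for odd `m > 1`,
where `V = {∑ x_k = 0} ⊂ ℝ^{n+2}`: a point of `Sⁿ ∩ V` is critical (i.e. satisfies the
Lagrange-multiplier condition `m x_i^{m-1} - 2μ x_i - ν = 0` for all `i`) iff its coordinates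
take exactly the two values `a_k > 0 > b_k` with multiplicities `k` and `n+2-k`, or the
negative of such a point; moreover the critical values `t_k` are strictly decreasing in `k`
for `1 ≤ k ≤ ⌊(n+2)/2⌋`. -/
theorem stmt_7 (n m : ℕ) (hm : Odd m) (hm1 : 1 < m) :
    (∀ x : Fin (n + 2) → ℝ, (∑ i, x i = 0) → (∑ i, (x i) ^ 2 = 1) →
      ((∃ μ ν : ℝ, ∀ i, (m : ℝ) * x i ^ (m - 1) - 2 * μ * x i - ν = 0) ↔
        ∃ k : ℕ, 1 ≤ k ∧ k ≤ n + 1 ∧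
          (((∀ i, x i = aVal n k ∨ x i = bVal n k) ∧ {i | x i = aVal n k}.ncard = k) ∨
            ((∀ i, -x i = aVal n k ∨ -x i = bVal n k) ∧ {i | -x i = aVal n k}.ncard = k)))) ∧
      (∀ k : ℕ, 1 ≤ k → k + 1 ≤ (n + 2) / 2 → tVal n (k + 1) m < tVal n k m) := by
  refine ⟨fun x hsum hsq => ?_, fun k hk hk2 => tVal_succ_lt_tVal hm hm1 hk hk2⟩
  rw [exists_lagrange_iff_exists_affine (by omega)]
  constructor
  · rintro ⟨α, β, h⟩
    have hconv := (Nat.Odd.sub_odd hm odd_one).strictConvexOn_pow (by omega)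
    obtain ⟨i₀, j₀, hle, htwo⟩ := hconv.exists_forall_eq_or_eq h
    obtain ⟨k, hk, hkn, hx⟩ := exists_aVal_bVal_of_forall_eq_or_eq hsum hsq hle htwo
    exact ⟨k, hk, hkn, Or.inl hx⟩
  · rintro ⟨k, hk, hkn, ⟨htwo, -⟩ | ⟨htwo, -⟩⟩
    · exact exists_affine_of_forall_eq_or_eq _ (bVal_lt_aVal hk hkn).ne' htwo
    · exact exists_affine_of_forall_eq_or_eq _ (neg_injective.ne (bVal_lt_aVal hk hkn).ne')
        fun i => (htwo i).imp neg_eq_iff_eq_neg.1 neg_eq_iff_eq_neg.1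
end

section
/- The function h(y) = y·((n+2-y)/y)^{m/2} - (n+2-y)·(y/(n+2-y))^{m/2} is strictly decreasing on the interval (0, n+2), for every odd integer m > 1 and every n ≥ 0. -/
/-! Writing `N = n + 2` and `p = m / 2 ≥ 1`, one has `y · ((N - y) / y) ^ p = (N - y) ^ p / y ^ (p - 1)`,
whose numerator strictly decreases and whose denominator weakly increases in `y`; the subtracted
term is the same expression at `N - y`, hence increasing in `y`. -/

lemma mul_div_rpow_eq_rpow_div_rpow_sub_one {x y : ℝ} (p : ℝ) (hx : 0 ≤ x) (hy : 0 < y) :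
    y * (x / y) ^ p = x ^ p / y ^ (p - 1) := by
  rw [Real.div_rpow hx hy.le, Real.rpow_sub_one hy.ne']
  have : y ^ p ≠ 0 := (Real.rpow_pos_of_pos hy p).ne'
  field_simp

lemma rpow_div_rpow_sub_one_lt {p a b c d : ℝ} (hp : 1 ≤ p) (hd : 0 ≤ d) (hdc : d < c)
    (ha : 0 < a) (hab : a ≤ b) :
    d ^ p / b ^ (p - 1) < c ^ p / a ^ (p - 1) :=
  div_lt_div₀ (Real.rpow_lt_rpow hd hdc (by linarith))
    (Real.rpow_le_rpow ha.le hab (by linarith)) (Real.rpow_nonneg (hd.trans hdc.le) p)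
    (Real.rpow_pos_of_pos ha _)

theorem stmt_8_general (n m : ℕ) (hm1 : 1 < m) :
    StrictAntiOn
      (fun y : ℝ =>
        y * (((n : ℝ) + 2 - y) / y) ^ ((m : ℝ) / 2)
          - ((n : ℝ) + 2 - y) * (y / ((n : ℝ) + 2 - y)) ^ ((m : ℝ) / 2))
      (Set.Ioo 0 ((n : ℝ) + 2)) := by
  set N : ℝ := (n : ℝ) + 2
  set p : ℝ := (m : ℝ) / 2
  have hp : 1 ≤ p := by
    have : (2 : ℝ) ≤ m := by exact_mod_cast hm1
    simp only [p]; linarith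
  rintro a ⟨ha0, haN⟩ b ⟨hb0, hbN⟩ hab
  simp only [mul_div_rpow_eq_rpow_div_rpow_sub_one p (sub_nonneg.2 haN.le) ha0,
    mul_div_rpow_eq_rpow_div_rpow_sub_one p (sub_nonneg.2 hbN.le) hb0,
    mul_div_rpow_eq_rpow_div_rpow_sub_one p ha0.le (sub_pos.2 haN),
    mul_div_rpow_eq_rpow_div_rpow_sub_one p hb0.le (sub_pos.2 hbN)]
  have first_decreases : (N - b) ^ p / b ^ (p - 1) < (N - a) ^ p / a ^ (p - 1) :=
    rpow_div_rpow_sub_one_lt hp (by linarith) (by linarith) ha0 hab.le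
  have second_increases : a ^ p / (N - a) ^ (p - 1) < b ^ p / (N - b) ^ (p - 1) :=
    rpow_div_rpow_sub_one_lt hp ha0.le hab (by linarith) (by linarith)
  linarith

/-- The function `h(y) = y·((n+2-y)/y)^{m/2} - (n+2-y)·(y/(n+2-y))^{m/2}` is strictly
decreasing on `(0, n+2)`, for every odd integer `m > 1` and every `n ≥ 0`. -/
theorem stmt_8 (n m : ℕ) (hm : Odd m) (hm1 : 1 < m) :
    StrictAntiOn
      (fun y : ℝ =>
        y * (((n : ℝ) + 2 - y) / y) ^ ((m : ℝ) / 2)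
          - ((n : ℝ) + 2 - y) * (y / ((n : ℝ) + 2 - y)) ^ ((m : ℝ) / 2))
      (Set.Ioo 0 ((n : ℝ) + 2)) :=
  stmt_8_general n m hm1
end
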